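/- Let Γ be a group, Λ ≤ Γ an almost malnormal subgroup, s, t ∈ Γ \ Λ, and let (g_n)_{n∈ℕ} be a sequence in Λ that eventually leaves every finite subset of Λ (i.e., for every finite F ⊆ Λ there is N with g_n ∉ F for n ≥ N). Then s g_n t ∈ Λ for at most finitely many n. -/
import Mathlib


/-- Let `Λ ≤ Γ` be an almost malnormal subgroup, `s, t ∈ Γ \ Λ`, and `(g_n)` a
sequence in `Λ` that eventually leaves every finite subset of `Λ`. Then
`s g_n t ∈ Λ` for at most finitely many `n`. -/
theorem almost_malnormal_mixing
    {Γ : Type*} [Group Γ] (Λ : Subgroup Γ)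
    (hmal : ∀ g : Γ, g ∉ Λ → {y : Γ | y ∈ Λ ∧ g⁻¹ * y * g ∈ Λ}.Finite)
    (s t : Γ) (hs : s ∉ Λ) (ht : t ∉ Λ)
    (g : ℕ → Γ) (hg : ∀ n, g n ∈ Λ)
    (hleave : ∀ F : Set Γ, F.Finite → ∃ N : ℕ, ∀ n ≥ N, g n ∉ F) :
    {n : ℕ | s * g n * t ∈ Λ}.Finite := by
  by_contra hinf
  replace hinf : {n : ℕ | s * g n * t ∈ Λ}.Infinite := hinf
  obtain ⟨m, hm⟩ := hinf.nonempty
  have hsinv : s⁻¹ ∉ Λ := fun h => hs (by simpa using Λ.inv_mem h)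
  have hF : {y : Γ | y ∈ Λ ∧ (s⁻¹)⁻¹ * y * s⁻¹ ∈ Λ}.Finite := hmal s⁻¹ hsinv
  have hF' : ((fun y => y * g m) '' {y : Γ | y ∈ Λ ∧ (s⁻¹)⁻¹ * y * s⁻¹ ∈ Λ}).Finite :=
    hF.image _
  obtain ⟨N, hN⟩ := hleave _ hF'
  obtain ⟨n, hnS, hnN⟩ := hinf.exists_gt N -- need n > N in S
  refine hN n (le_of_lt hnN) ?_
  refine ⟨g n * (g m)⁻¹, ⟨Λ.mul_mem (hg n) (Λ.inv_mem (hg m)), ?_⟩, by group⟩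
  have h1 : s * g n * t ∈ Λ := hnS
  have h2 : s * g m * t ∈ Λ := hm
  have : (s * g n * t) * (s * g m * t)⁻¹ ∈ Λ := Λ.mul_mem h1 (Λ.inv_mem h2)
  have heq : (s * g n * t) * (s * g m * t)⁻¹ = (s⁻¹)⁻¹ * (g n * (g m)⁻¹) * s⁻¹ := by
    group
  rwa [heq] at this
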